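/- Let l ∈ ℕ and define w_l(x) = ∂_s[G_−(x,s) − G_+(x,s)]|_{s=l/2} for x > 0 (the s-derivative exists since s ↦ G_±(x,s) is entire for fixed x > 0). Then w_l is twice differentiable on (0,∞) and satisfies x²w_l''(x) + x w_l'(x) − (x + l²/4)·w_l(x) = 0 for all x > 0; i.e., w_l is a solution of the Yukawa equation at s = l/2. -/

import Mathlib

/-!
In the variable `z = log x` the Yukawa operator becomes `u'' - (e^z + s²) u` and
`G₊(e^z, s) = ∑ b_j(s) e^{(s+j)z}`. Since `b_j = (j+1)(2s+j+1) b_{j+1}`, the second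
`z`-derivative of the `(j+1)`-st term is `s²` times itself plus `e^z` times the `j`-th term, and
differentiating this termwise identity in `s` shows that `∂_s G₊` solves the equation up to the
inhomogeneity `2s G₊`. Hence `w_l = -∂_s G₊(·, -l/2) - ∂_s G₊(·, l/2)` solves it up to
`l (G₋ - G₊)(·, l/2) = 0`. The termwise differentiations are justified by normal convergence on
discs (Weierstrass), using `b_j(s) = O(1/j!)` locally uniformly in `s` and Cauchy's estimates
for the derivatives.
-/

/-- `b_j^+(s) = (j! Γ(2s+j+1))⁻¹`, with the reciprocal Gamma convention
(Mathlib's `Complex.Gamma` vanishes at its poles). -/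
noncomputable def bcoef (s : ℂ) (j : ℕ) : ℂ :=
  ((j.factorial : ℂ) * Complex.Gamma (2 * s + (j : ℂ) + 1))⁻¹

/-- `G_+(x,s) = Σ_{j=0}^∞ b_j^+(s) x^{s+j}` for `x > 0`. -/
noncomputable def Gp (x : ℝ) (s : ℂ) : ℂ :=
  ∑' j : ℕ, bcoef s j * (x : ℂ) ^ (s + (j : ℂ))

/-- `G_-(x,s) = G_+(x,-s)` for `x > 0`. -/
noncomputable def Gm (x : ℝ) (s : ℂ) : ℂ := Gp x (-s)

/-- `w_l(x) = ∂_s[G_−(x,s) − G_+(x,s)]|_{s=l/2}`. -/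
noncomputable def wl (l : ℕ) (x : ℝ) : ℂ :=
  deriv (fun s : ℂ => Gm x s - Gp x s) ((l : ℂ) / 2)

open Complex Metric

lemma Complex.mul_inv_Gamma_add_one (w : ℂ) : w * (Gamma (w + 1))⁻¹ = (Gamma w)⁻¹ := by
  rcases eq_or_ne w 0 with rfl | hw
  · simp [Gamma_zero]
  · rw [Gamma_add_one w hw, mul_inv, ← mul_assoc, mul_inv_cancel₀ hw, one_mul]

/-- `1 / Γ(w + n + 1) = (1 / Γ(w + n)) / (w + n)` with `‖w + n‖ ≥ 1` once `n` is large; the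
remaining `n` are handled by compactness. -/
lemma Complex.exists_norm_inv_Gamma_add_nat_le (w₀ : ℂ) (r : ℝ) :
    ∃ C, ∀ n : ℕ, ∀ w ∈ closedBall w₀ r, ‖(Gamma (w + n))⁻¹‖ ≤ C := by
  set N : ℕ := ⌈‖w₀‖ + r⌉₊ + 1
  obtain ⟨C, hC⟩ := (isCompact_closedBall w₀ (r + N)).exists_bound_of_continuousOn
    differentiable_one_div_Gamma.continuous.continuousOn
  refine ⟨C, fun n w hw => ?_⟩
  rw [mem_closedBall, dist_eq_norm] at hw
  have hsmall : ∀ n ≤ N, ‖(Gamma (w + n))⁻¹‖ ≤ C := fun n hn => by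
    refine hC _ (mem_closedBall_iff_norm.2 ?_)
    have : (n : ℝ) ≤ N := by exact_mod_cast hn
    calc ‖w + n - w₀‖ = ‖(w - w₀) + (n : ℂ)‖ := by ring_nf
      _ ≤ ‖w - w₀‖ + n := by simpa using norm_add_le (w - w₀) (n : ℂ)
      _ ≤ r + N := by linarith
  have hstep : ∀ n, N ≤ n → ‖(Gamma (w + (n + 1 : ℕ)))⁻¹‖ ≤ ‖(Gamma (w + n))⁻¹‖ := by
    intro n hn
    have hN : ‖w₀‖ + r + 1 ≤ N := by
      simp only [N, Nat.cast_add, Nat.cast_one]; linarith [Nat.le_ceil (‖w₀‖ + r)]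
    have hn' : (N : ℝ) ≤ n := by exact_mod_cast hn
    have hwn : 1 ≤ ‖w + n‖ := by
      have := norm_sub_norm_le (n : ℂ) (-w)
      rw [norm_neg, Complex.norm_natCast, sub_neg_eq_add, add_comm] at this
      linarith [norm_le_norm_add_norm_sub' w w₀]
    rw [← mul_inv_Gamma_add_one (w + n), norm_mul, Nat.cast_succ, ← add_assoc]
    exact le_mul_of_one_le_left (norm_nonneg _) hwn
  induction n with
  | zero => exact hsmall 0 (Nat.zero_le _)
  | succ n ih =>
    rcases le_or_gt (n + 1) N with h | h
    · exact hsmall _ h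
    · exact (hstep n (by omega)).trans ih

def LocallyNormallySummable {ι : Type*} (F : ι → ℂ → ℂ) : Prop :=
  ∀ R : ℝ, ∃ u : ι → ℝ, Summable u ∧ ∀ i, ∀ w ∈ ball (0 : ℂ) R, ‖F i w‖ ≤ u i

namespace LocallyNormallySummable

variable {ι : Type*} {F : ι → ℂ → ℂ}

lemma summable (hF : LocallyNormallySummable F) (z : ℂ) : Summable (F · z) := by
  obtain ⟨u, hu, hle⟩ := hF (‖z‖ + 1)
  exact hu.of_norm_bounded fun i => hle i z (by simp)

lemma hasDerivAt_tsum (hF : LocallyNormallySummable F) (hd : ∀ i, Differentiable ℂ (F i))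
    (z : ℂ) : HasDerivAt (fun w => ∑' i, F i w) (∑' i, deriv (F i) z) z := by
  obtain ⟨u, hu, hle⟩ := hF (‖z‖ + 1)
  have hz : z ∈ ball (0 : ℂ) (‖z‖ + 1) := by simp
  have hdiff := differentiableOn_tsum_of_summable_norm hu (fun i => (hd i).differentiableOn)
    isOpen_ball hle
  rw [(hasSum_deriv_of_summable_norm hu (fun i => (hd i).differentiableOn) isOpen_ball hle
    hz).tsum_eq]
  exact (hdiff.differentiableAt (isOpen_ball.mem_nhds hz)).hasDerivAt

lemma differentiable_tsum (hF : LocallyNormallySummable F) (hd : ∀ i, Differentiable ℂ (F i)) :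
    Differentiable ℂ fun w => ∑' i, F i w :=
  fun z => (hF.hasDerivAt_tsum hd z).differentiableAt

lemma deriv_tsum (hF : LocallyNormallySummable F) (hd : ∀ i, Differentiable ℂ (F i)) :
    deriv (fun w => ∑' i, F i w) = fun z => ∑' i, deriv (F i) z :=
  funext fun z => (hF.hasDerivAt_tsum hd z).deriv

/-- By Cauchy's estimate on unit circles. -/
lemma deriv (hF : LocallyNormallySummable F) (hd : ∀ i, Differentiable ℂ (F i)) :
    LocallyNormallySummable fun i => deriv (F i) := by
  intro R
  obtain ⟨u, hu, hle⟩ := hF (R + 1)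
  refine ⟨u, hu, fun i w hw => ?_⟩
  have := Complex.norm_deriv_le_of_forall_mem_sphere_norm_le (c := w) one_pos
    (hd i).diffContOnCl fun v hv => hle i v <| by
      rw [mem_ball_zero_iff] at hw ⊢
      rw [mem_sphere_iff_norm] at hv
      linarith [norm_le_norm_add_norm_sub' v w]
  simpa using this

end LocallyNormallySummable

lemma bcoef_eq_inv_mul (s : ℂ) (j : ℕ) :
    bcoef s j = (j.factorial : ℂ)⁻¹ * (Gamma (2 * s + j + 1))⁻¹ :=
  mul_inv _ _

lemma differentiable_bcoef (j : ℕ) : Differentiable ℂ (bcoef · j) := by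
  simp only [bcoef_eq_inv_mul]
  exact (differentiable_one_div_Gamma.comp (by fun_prop)).const_mul _

lemma bcoef_eq_mul_bcoef_succ (s : ℂ) (j : ℕ) :
    bcoef s j = (j + 1) * (2 * s + j + 1) * bcoef s (j + 1) := by
  have hj : (j + 1 : ℂ) ≠ 0 := Nat.cast_add_one_ne_zero j
  have hG := mul_inv_Gamma_add_one (2 * s + j + 1)
  simp only [bcoef_eq_inv_mul, Nat.factorial_succ, Nat.cast_mul, Nat.cast_succ, mul_inv]
  rw [← hG, show 2 * s + (j + 1 : ℂ) + 1 = 2 * s + j + 1 + 1 by ring]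
  field_simp

lemma deriv_bcoef_eq (s : ℂ) (j : ℕ) :
    deriv (bcoef · j) s =
      (j + 1) * ((2 * s + j + 1) * deriv (bcoef · (j + 1)) s + 2 * bcoef s (j + 1)) := by
  have hlin : HasDerivAt (fun s : ℂ => (j + 1) * (2 * s + j + 1)) ((j + 1) * 2) s := by
    simpa [add_assoc] using (((hasDerivAt_id s).const_mul 2).add_const (j + 1 : ℂ)).const_mul
      (j + 1 : ℂ)
  have h := hlin.fun_mul (differentiable_bcoef (j + 1) s).hasDerivAt
  rw [funext fun s => bcoef_eq_mul_bcoef_succ s j, h.deriv]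
  ring

lemma exists_norm_bcoef_le (S : ℝ) :
    ∃ C, ∀ j : ℕ, ∀ s : ℂ, ‖s‖ ≤ S → ‖bcoef s j‖ ≤ C / j.factorial := by
  obtain ⟨C, hC⟩ := exists_norm_inv_Gamma_add_nat_le 1 (2 * S)
  refine ⟨C, fun j s hs => ?_⟩
  have hmem : 2 * s + 1 ∈ closedBall (1 : ℂ) (2 * S) := by
    rw [mem_closedBall_iff_norm, add_sub_cancel_right, norm_mul]
    norm_num
    linarith
  have := hC j _ hmem
  rw [bcoef_eq_inv_mul, norm_mul, norm_inv, Complex.norm_natCast, add_right_comm,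
    div_eq_inv_mul]
  gcongr

noncomputable def gTerm (s z : ℂ) (j : ℕ) : ℂ := bcoef s j * cexp ((s + j) * z)

/-- `gSeries s z = G₊(e^z, s)`. -/
noncomputable def gSeries (s z : ℂ) : ℂ := ∑' j, gTerm s z j

noncomputable def dgTerm (s z : ℂ) (j : ℕ) : ℂ :=
  (deriv (bcoef · j) s + bcoef s j * z) * cexp ((s + j) * z)

noncomputable def dgSeries (s z : ℂ) : ℂ := ∑' j, dgTerm s z j

lemma Gp_eq_gSeries {x : ℝ} (hx : 0 < x) (s : ℂ) : Gp x s = gSeries s (Real.log x) := by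
  refine tsum_congr fun j => ?_
  rw [gTerm, cpow_def_of_ne_zero (ofReal_ne_zero.2 hx.ne'), ofReal_log hx.le, mul_comm (log _)]

lemma hasDerivAt_gTerm (z : ℂ) (j : ℕ) (s : ℂ) :
    HasDerivAt (fun s => gTerm s z j) (dgTerm s z j) s := by
  have hlin : HasDerivAt (fun s : ℂ => (s + j) * z) z s := by
    simpa using ((hasDerivAt_id s).add_const (j : ℂ)).mul_const z
  refine ((differentiable_bcoef j s).hasDerivAt.fun_mul hlin.cexp).congr_deriv ?_
  rw [dgTerm]
  ring

lemma exists_norm_gTerm_le (S R : ℝ) :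
    ∃ C, ∀ j : ℕ, ∀ s z : ℂ, ‖s‖ ≤ S → ‖z‖ ≤ R →
      ‖gTerm s z j‖ ≤ C * (Real.exp R ^ j / j.factorial) := by
  obtain ⟨C, hC⟩ := exists_norm_bcoef_le S
  refine ⟨C * Real.exp (S * R), fun j s z hs hz => ?_⟩
  have hexp : ‖cexp ((s + j) * z)‖ ≤ Real.exp ((S + j) * R) := by
    refine (norm_exp_le_exp_norm _).trans (Real.exp_le_exp.2 ?_)
    rw [norm_mul]
    gcongr
    · linarith [norm_nonneg s]
    · exact (norm_add_le _ _).trans (by simpa using hs)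
  calc ‖gTerm s z j‖ ≤ C / j.factorial * Real.exp ((S + j) * R) := by
        rw [gTerm, norm_mul]
        exact mul_le_mul (hC j s hs) hexp (norm_nonneg _) ((norm_nonneg _).trans (hC j s hs))
    _ = C * Real.exp (S * R) * (Real.exp R ^ j / j.factorial) := by
        rw [add_mul, Real.exp_add, ← Real.exp_nat_mul, mul_comm (j : ℝ)]
        ring

lemma locallyNormallySummable_gTerm (z : ℂ) :
    LocallyNormallySummable fun j s => gTerm s z j := by
  intro R
  obtain ⟨C, hC⟩ := exists_norm_gTerm_le R ‖z‖
  exact ⟨_, (Real.summable_pow_div_factorial _).mul_left C,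
    fun j s hs => hC j s z (mem_ball_zero_iff.1 hs).le le_rfl⟩

lemma summable_gTerm (s z : ℂ) : Summable (gTerm s z) :=
  (locallyNormallySummable_gTerm z).summable s

lemma hasDerivAt_gSeries (z s : ℂ) : HasDerivAt (gSeries · z) (dgSeries s z) s :=
  ((locallyNormallySummable_gTerm z).hasDerivAt_tsum
    (fun j s => (hasDerivAt_gTerm z j s).differentiableAt) s).congr_deriv
    (tsum_congr fun j => (hasDerivAt_gTerm z j s).deriv)

/-- The bound on `dgTerm` comes from Cauchy's estimate in `s`, not from a bound on `bcoef'`. -/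
lemma locallyNormallySummable_dgTerm (s : ℂ) :
    LocallyNormallySummable fun j z => dgTerm s z j := by
  intro R
  obtain ⟨C, hC⟩ := exists_norm_gTerm_le (‖s‖ + 1) R
  refine ⟨_, (Real.summable_pow_div_factorial (Real.exp R)).mul_left C, fun j z hz => ?_⟩
  have hdiff : Differentiable ℂ fun s => gTerm s z j :=
    fun s => (hasDerivAt_gTerm z j s).differentiableAt
  have := norm_deriv_le_of_forall_mem_sphere_norm_le (c := s) one_pos hdiff.diffContOnCl
    fun v hv => hC j v z ?_ (mem_ball_zero_iff.1 hz).le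
  · rwa [(hasDerivAt_gTerm z j s).deriv, div_one] at this
  rw [mem_sphere_iff_norm] at hv
  linarith [norm_le_norm_add_norm_sub' v s]

lemma hasDerivAt_affine_mul_cexp (p q μ z : ℂ) :
    HasDerivAt (fun z => (p + q * z) * cexp (μ * z)) ((q + μ * (p + q * z)) * cexp (μ * z)) z := by
  have haff : HasDerivAt (fun z => p + q * z) q z := by
    simpa using ((hasDerivAt_id z).const_mul q).const_add p
  have hexp : HasDerivAt (fun z => cexp (μ * z)) (cexp (μ * z) * μ) z := by
    simpa using ((hasDerivAt_id z).const_mul μ).cexp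
  exact (haff.fun_mul hexp).congr_deriv (by ring)

lemma deriv_deriv_affine_mul_cexp (p q μ z : ℂ) :
    deriv (deriv fun z => (p + q * z) * cexp (μ * z)) z =
      (2 * μ * q + μ ^ 2 * (p + q * z)) * cexp (μ * z) := by
  have h : deriv (fun z => (p + q * z) * cexp (μ * z)) =
      fun z => ((q + μ * p) + μ * q * z) * cexp (μ * z) :=
    funext fun z => (hasDerivAt_affine_mul_cexp p q μ z).deriv.trans (by ring)
  rw [h, (hasDerivAt_affine_mul_cexp _ _ μ z).deriv]
  ring

lemma differentiable_dgTerm (s : ℂ) (j : ℕ) : Differentiable ℂ (dgTerm s · j) :=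
  fun z => (hasDerivAt_affine_mul_cexp _ _ _ z).differentiableAt

lemma deriv_deriv_dgTerm_zero (s z : ℂ) :
    deriv (deriv (dgTerm s · 0)) z = s ^ 2 * dgTerm s z 0 + 2 * s * gTerm s z 0 := by
  simp only [dgTerm, gTerm]
  rw [deriv_deriv_affine_mul_cexp]
  push_cast
  ring

lemma deriv_deriv_dgTerm_succ (s z : ℂ) (j : ℕ) :
    deriv (deriv (dgTerm s · (j + 1))) z =
      s ^ 2 * dgTerm s z (j + 1) + 2 * s * gTerm s z (j + 1) + cexp z * dgTerm s z j := by
  have hexp : cexp z * cexp ((s + j) * z) = cexp ((s + (j + 1 : ℕ)) * z) := by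
    rw [← Complex.exp_add]; push_cast; ring_nf
  simp only [dgTerm, gTerm]
  rw [deriv_deriv_affine_mul_cexp, deriv_bcoef_eq s j, bcoef_eq_mul_bcoef_succ s j,
    ← mul_assoc (cexp z), mul_comm (cexp z), mul_assoc _ (cexp z), hexp]
  push_cast
  ring

lemma differentiable_dgSeries (s : ℂ) : Differentiable ℂ (dgSeries s) :=
  (locallyNormallySummable_dgTerm s).differentiable_tsum (differentiable_dgTerm s)

lemma deriv_deriv_dgSeries (s z : ℂ) :
    deriv (deriv (dgSeries s)) z = (cexp z + s ^ 2) * dgSeries s z + 2 * s * gSeries s z := by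
  have hD := (locallyNormallySummable_dgTerm s).deriv_tsum (differentiable_dgTerm s)
  have hDD := ((locallyNormallySummable_dgTerm s).deriv (differentiable_dgTerm s)).deriv_tsum
    fun j => (differentiable_dgTerm s j).deriv
  have hd : HasSum (dgTerm s z) (dgSeries s z) :=
    ((locallyNormallySummable_dgTerm s).summable z).hasSum
  have hg : HasSum (gTerm s z) (gSeries s z) := (summable_gTerm s z).hasSum
  have hshift : HasSum (fun j => deriv (deriv (dgTerm s · (j + 1))) z)
      ((cexp z + s ^ 2) * dgSeries s z + 2 * s * gSeries s z -
        (s ^ 2 * dgTerm s z 0 + 2 * s * gTerm s z 0)) := by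
    have := ((((hasSum_nat_add_iff' 1).2 hd).mul_left (s ^ 2)).add
      (((hasSum_nat_add_iff' 1).2 hg).mul_left (2 * s))).add (hd.mul_left (cexp z))
    simp only [Finset.sum_range_one] at this
    simp only [deriv_deriv_dgTerm_succ]
    rwa [show (cexp z + s ^ 2) * dgSeries s z + 2 * s * gSeries s z -
        (s ^ 2 * dgTerm s z 0 + 2 * s * gTerm s z 0) = s ^ 2 * (dgSeries s z - dgTerm s z 0) +
          2 * s * (gSeries s z - gTerm s z 0) + cexp z * dgSeries s z by ring]
  change deriv (deriv fun w => ∑' j, dgTerm s w j) z = _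
  rw [hD, hDD]
  refine ((hasSum_nat_add_iff' 1).1 ?_).tsum_eq
  rwa [Finset.sum_range_one, deriv_deriv_dgTerm_zero]

lemma gTerm_neg_half_nat_of_lt {l j : ℕ} (hj : j < l) (z : ℂ) : gTerm (-(l / 2)) z j = 0 := by
  have hpole : 2 * -((l : ℂ) / 2) + j + 1 = -((l - (j + 1) : ℕ) : ℂ) := by
    rw [Nat.cast_sub hj]; push_cast; ring
  rw [gTerm, bcoef, hpole, Gamma_neg_nat_eq_zero, mul_zero, inv_zero, zero_mul]

lemma gTerm_neg_half_nat_add (l k : ℕ) (z : ℂ) :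
    gTerm (-(l / 2)) z (k + l) = gTerm (l / 2) z k := by
  have h₁ : 2 * -((l : ℂ) / 2) + (k + l : ℕ) + 1 = k + 1 := by push_cast; ring
  have h₂ : 2 * ((l : ℂ) / 2) + k + 1 = (l + k : ℕ) + 1 := by push_cast; ring
  have h₃ : (-((l : ℂ) / 2) + (k + l : ℕ)) * z = ((l : ℂ) / 2 + k) * z := by push_cast; ring
  rw [gTerm, gTerm, bcoef, bcoef, h₁, h₂, h₃, Gamma_nat_eq_factorial, Gamma_nat_eq_factorial,
    add_comm l k]
  ring

/-- `G₋(·, l/2) = G₊(·, l/2)`: the first `l` terms at `-l/2` vanish (poles of `Γ`) and the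
rest are those at `l/2`, shifted by `l`. -/
lemma gSeries_neg_half_nat (l : ℕ) (z : ℂ) : gSeries (-(l / 2)) z = gSeries (l / 2) z := by
  have hsupp : Function.support (gTerm (-(l / 2)) z) ⊆ Set.range (· + l) := fun j hj =>
    ⟨j - l, Nat.sub_add_cancel (not_lt.1 fun h => hj (gTerm_neg_half_nat_of_lt h z))⟩
  rw [gSeries, gSeries, ← (add_left_injective l).tsum_eq hsupp]
  exact tsum_congr fun k => gTerm_neg_half_nat_add l k z

/-- `wLog l z = w_l(e^z)`. -/
noncomputable def wLog (l : ℕ) (z : ℂ) : ℂ := -dgSeries (-(l / 2)) z - dgSeries (l / 2) z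

lemma wl_eq_wLog (l : ℕ) {x : ℝ} (hx : 0 < x) : wl l x = wLog l (Real.log x) := by
  have h : HasDerivAt (fun s => gSeries (-s) (Real.log x) - gSeries s (Real.log x))
      (wLog l (Real.log x)) ((l : ℂ) / 2) :=
    (((hasDerivAt_gSeries _ _).comp _ (hasDerivAt_neg _)).sub
      (hasDerivAt_gSeries _ _)).congr_deriv (by rw [wLog]; ring)
  rw [wl, ← h.deriv]
  simp only [Gm, Gp_eq_gSeries hx]

lemma hasDerivAt_neg_sub {f g : ℂ → ℂ} (hf : Differentiable ℂ f) (hg : Differentiable ℂ g)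
    (z : ℂ) : HasDerivAt (fun z => -f z - g z) (-deriv f z - deriv g z) z :=
  (hf z).hasDerivAt.neg.sub (hg z).hasDerivAt

lemma differentiable_wLog (l : ℕ) : Differentiable ℂ (wLog l) :=
  fun z =>
    (hasDerivAt_neg_sub (differentiable_dgSeries _) (differentiable_dgSeries _) z).differentiableAt

lemma deriv_deriv_wLog (l : ℕ) (z : ℂ) :
    deriv (deriv (wLog l)) z = (cexp z + (l : ℂ) ^ 2 / 4) * wLog l z := by
  have hd := fun s => differentiable_dgSeries s
  have h₁ : deriv (wLog l) = fun z => -deriv (dgSeries (-(l / 2))) z - deriv (dgSeries (l / 2)) z :=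
    funext fun z => (hasDerivAt_neg_sub (hd _) (hd _) z).deriv
  rw [h₁, (hasDerivAt_neg_sub (hd _).deriv (hd _).deriv z).deriv, deriv_deriv_dgSeries,
    deriv_deriv_dgSeries, gSeries_neg_half_nat, wLog]
  ring

lemma hasDerivAt_comp_log {V : ℂ → ℂ} (hV : Differentiable ℂ V) {x : ℝ} (hx : x ≠ 0) :
    HasDerivAt (fun x : ℝ => V (Real.log x)) ((x : ℂ)⁻¹ * deriv V (Real.log x)) x := by
  have := ((hV _).hasDerivAt.comp_ofReal).scomp x (Real.hasDerivAt_log hx)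
  rwa [real_smul, ofReal_inv] at this

/-- With `x = e^t` one has `x d/dx = d/dt`. -/
lemma exists_hasDerivAt_yukawa_of_log {f : ℝ → ℂ} {W : ℂ → ℂ} {c : ℂ} (hW : Differentiable ℂ W)
    (hf : ∀ x, 0 < x → f x = W (Real.log x))
    (hode : ∀ t : ℝ, deriv (deriv W) t = (cexp t + c) * W t) :
    ∃ w' w'' : ℝ → ℂ,
      (∀ x : ℝ, 0 < x → HasDerivAt f (w' x) x) ∧
      (∀ x : ℝ, 0 < x → HasDerivAt w' (w'' x) x) ∧
      (∀ x : ℝ, 0 < x → (x : ℂ) ^ 2 * w'' x + x * w' x - (x + c) * f x = 0) := by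
  refine ⟨fun x => (x : ℂ)⁻¹ * deriv W (Real.log x),
    fun x => (x : ℂ)⁻¹ ^ 2 * (deriv (deriv W) (Real.log x) - deriv W (Real.log x)),
    fun x hx => ?_, fun x hx => ?_, fun x hx => ?_⟩
  · refine (hasDerivAt_comp_log hW hx.ne').congr_of_eventuallyEq ?_
    filter_upwards [eventually_gt_nhds hx] with y hy using hf y hy
  · have hx₀ : (x : ℂ) ≠ 0 := ofReal_ne_zero.2 hx.ne'
    refine (((hasDerivAt_inv hx₀).comp_ofReal).fun_mul
      (hasDerivAt_comp_log hW.deriv hx.ne')).congr_deriv ?_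
    field_simp
    ring
  · have hx₀ : (x : ℂ) ≠ 0 := ofReal_ne_zero.2 hx.ne'
    beta_reduce
    rw [hf x hx, hode, ← ofReal_exp, Real.exp_log hx]
    field_simp
    ring

theorem wl_solves_yukawa_general (l : ℕ) :
    ∃ w' w'' : ℝ → ℂ,
      (∀ x : ℝ, 0 < x → HasDerivAt (wl l) (w' x) x) ∧
      (∀ x : ℝ, 0 < x → HasDerivAt w' (w'' x) x) ∧
      (∀ x : ℝ, 0 < x →
        (x : ℂ) ^ 2 * w'' x + (x : ℂ) * w' x -
          ((x : ℂ) + (l : ℂ) ^ 2 / 4) * wl l x = 0) :=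
  exists_hasDerivAt_yukawa_of_log (differentiable_wLog l) (fun _ hx => wl_eq_wLog l hx)
    fun t => deriv_deriv_wLog l t

/-- `w_l` is twice differentiable on `(0,∞)` and solves the Yukawa
equation `x²w'' + xw' − (x + l²/4)w = 0` there. -/
theorem wl_solves_yukawa (l : ℕ) (hl : 0 < l) :
    ∃ w' w'' : ℝ → ℂ,
      (∀ x : ℝ, 0 < x → HasDerivAt (wl l) (w' x) x) ∧
      (∀ x : ℝ, 0 < x → HasDerivAt w' (w'' x) x) ∧
      (∀ x : ℝ, 0 < x →
        (x : ℂ) ^ 2 * w'' x + (x : ℂ) * w' x -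
          ((x : ℂ) + (l : ℂ) ^ 2 / 4) * wl l x = 0) :=
  wl_solves_yukawa_general l
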